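/- arXiv:1911.10922 — 2 statements merged into one kernel-verified Lean document; each statement's English description precedes it below -/
import Mathlib

section
/- For discrete random variables x, z with z = (z_1,...,z_J), the conditional entropy term admits the decomposition: H(z|x) = −E_{p(x)}[ D_KL( p(z|x) ‖ Π_j p(z_j|x) ) + Σ_j D_KL( p(z_j|x) ‖ Q(z_j|x) ) ] − E_{p(z,x)}[ log Q(z|x) ], for any family of conditional pmfs Q(z|x) of the factorized form Q(z|x) = Π_j Q(z_j|x) with Q(z_j|x) > 0 on the support of p(z_j|x). -/
/-!
On the support of `p` every ratio involved is positive, so `log p(z|x)` splits by telescoping: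
`log p(z|x) = log (p(z|x) / Π_j p(z_j|x)) + Σ_j log (p(z_j|x) / Q(z_j|x)) + log Π_j Q(z_j|x)`.
Off the support the weight `p x z` vanishes; summing against `p` gives the decomposition.
-/

noncomputable section

/-- Marginal pmf of the data variable `x`. -/
def pX {X : Type*} {J : ℕ} {Z : Fin J → Type*} [Fintype X] [∀ i, Fintype (Z i)]
    (p : X → (∀ i, Z i) → ℝ) (x : X) : ℝ :=
  ∑ z, p x z

/-- Joint pmf of `x` and the single factor `z_j`. -/
def pJ {X : Type*} {J : ℕ} {Z : Fin J → Type*} [Fintype X] [∀ i, Fintype (Z i)]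
    [∀ i, DecidableEq (Z i)]
    (p : X → (∀ i, Z i) → ℝ) (j : Fin J) (x : X) (t : Z j) : ℝ :=
  ∑ z : ∀ i, Z i, if z j = t then p x z else 0

/-- Conditional entropy `H(z|x) = −E_{p(z,x)}[log p(z|x)]`. -/
def condEnt {X : Type*} {J : ℕ} {Z : Fin J → Type*} [Fintype X] [∀ i, Fintype (Z i)]
    (p : X → (∀ i, Z i) → ℝ) : ℝ :=
  -∑ x, ∑ z, p x z * Real.log (p x z / pX p x)

open Finset

lemma Real.log_eq_log_div_prod_add_sum_log_div_add_log_prod {ι : Type*} (s : Finset ι)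
    {a : ℝ} (r q : ι → ℝ) (ha : 0 < a) (hr : ∀ i ∈ s, 0 < r i) (hq : ∀ i ∈ s, 0 < q i) :
    Real.log a = Real.log (a / ∏ i ∈ s, r i) + ∑ i ∈ s, Real.log (r i / q i)
      + Real.log (∏ i ∈ s, q i) := by
  rw [Real.log_div ha.ne' (prod_ne_zero_iff.2 fun i hi => (hr i hi).ne'),
    Real.log_prod (fun i hi => (hr i hi).ne'), Real.log_prod (fun i hi => (hq i hi).ne'),
    sum_congr rfl fun i hi => Real.log_div (hr i hi).ne' (hq i hi).ne', sum_sub_distrib]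
  ring

section Marginals

variable {X : Type*} {J : ℕ} {Z : Fin J → Type*} [Fintype X] [∀ i, Fintype (Z i)]
  {p : X → (∀ i, Z i) → ℝ}

lemma pX_pos_of_pos (hnn : ∀ x z, 0 ≤ p x z) {x : X} {z : ∀ i, Z i} (h : 0 < p x z) :
    0 < pX p x :=
  h.trans_le (single_le_sum (fun w _ => hnn x w) (mem_univ z))

lemma pJ_pos_of_pos [∀ i, DecidableEq (Z i)] (hnn : ∀ x z, 0 ≤ p x z) {x : X}
    {z : ∀ i, Z i} (h : 0 < p x z) (j : Fin J) : 0 < pJ p j x (z j) := by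
  refine lt_of_lt_of_le (by simpa using h)
    (single_le_sum (f := fun w : ∀ i, Z i => if w j = z j then p x w else 0)
      (fun w _ => ?_) (mem_univ z))
  split_ifs
  exacts [hnn x w, le_rfl]

end Marginals

theorem condEnt_variational_decomposition_general {X : Type*} {J : ℕ}
    {Z : Fin J → Type*} [Fintype X] [∀ i, Fintype (Z i)] [∀ i, DecidableEq (Z i)]
    (p : X → (∀ i, Z i) → ℝ)
    (hnn : ∀ x z, 0 ≤ p x z)
    (Qf : (j : Fin J) → X → Z j → ℝ)
    (hQpos : ∀ j x t, 0 < pJ p j x t → 0 < Qf j x t) :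
    condEnt p =
      -(∑ x, ∑ z, p x z *
            Real.log ((p x z / pX p x) / ∏ j, (pJ p j x (z j) / pX p x)))
        - (∑ x, ∑ z, p x z *
            ∑ j, Real.log ((pJ p j x (z j) / pX p x) / Qf j x (z j)))
        - (∑ x, ∑ z, p x z * Real.log (∏ j, Qf j x (z j))) := by
  have pointwise : ∀ x z, p x z * Real.log (p x z / pX p x) =
      p x z * Real.log ((p x z / pX p x) / ∏ j, (pJ p j x (z j) / pX p x))
      + p x z * ∑ j, Real.log ((pJ p j x (z j) / pX p x) / Qf j x (z j))
      + p x z * Real.log (∏ j, Qf j x (z j)) := by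
    intro x z
    rcases (hnn x z).eq_or_lt with h | h
    · simp [← h]
    have hpX := pX_pos_of_pos hnn h
    rw [Real.log_eq_log_div_prod_add_sum_log_div_add_log_prod univ _ _ (div_pos h hpX)
      (fun j _ => div_pos (pJ_pos_of_pos hnn h j) hpX)
      (fun j _ => hQpos j x _ (pJ_pos_of_pos hnn h j))]
    ring
  simp only [condEnt, pointwise, sum_add_distrib]
  ring

/-- **Variational decomposition of the conditional entropy.**  For any family
of factorized conditional pmfs `Q(z|x) = Π_j Q(z_j|x)` with `Q(z_j|x) > 0` on
the support of `p(z_j|x)`: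
`H(z|x) = −E_{p(x)}[ D_KL(p(z|x) ‖ Π_j p(z_j|x)) + Σ_j D_KL(p(z_j|x) ‖ Q(z_j|x)) ]
          − E_{p(z,x)}[log Q(z|x)]`,
with the KL divergences (and outer expectations) written as expectations of
the corresponding log-ratios under the joint pmf `p`. -/
theorem condEnt_variational_decomposition {X : Type*} {J : ℕ}
    {Z : Fin J → Type*} [Fintype X] [∀ i, Fintype (Z i)] [∀ i, DecidableEq (Z i)]
    (p : X → (∀ i, Z i) → ℝ)
    (hnn : ∀ x z, 0 ≤ p x z) (hsum : ∑ x, ∑ z, p x z = 1)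
    (Qf : (j : Fin J) → X → Z j → ℝ)
    (hQsum : ∀ j x, ∑ t, Qf j x t = 1)
    (hQpos : ∀ j x t, 0 < pJ p j x t → 0 < Qf j x t) :
    condEnt p =
      -(∑ x, ∑ z, p x z *
            Real.log ((p x z / pX p x) / ∏ j, (pJ p j x (z j) / pX p x)))
        - (∑ x, ∑ z, p x z *
            ∑ j, Real.log ((pJ p j x (z j) / pX p x) / Qf j x (z j)))
        - (∑ x, ∑ z, p x z * Real.log (∏ j, Qf j x (z j))) :=
  condEnt_variational_decomposition_general p hnn Qf hQpos
end
end

section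
/- For discrete random variables x and z = (z_1,...,z_J): if the components of z are conditionally independent given x (q(z|x) = Π_j q(z_j|x) whenever q(x)>0), then I(z; x) − Σ_j I(z_j; x) = −D_KL(q(z) ‖ Π_j q(z_j)) ≤ 0, i.e. the joint mutual information is at most the sum of per-factor mutual informations, with the gap equal to the total correlation of the marginal. -/
/-! Under conditional independence the factors `q(z_j | x)` cancel in the pointwise log-ratio: wherever
`q(x, z) > 0`, the joint log-ratio minus the per-factor log-ratios is `log (∏ⱼ q(z_j) / q(z))`.
Averaging against `q` leaves minus the total correlation `D_KL(q(z) ‖ ∏ⱼ q(z_j))`, which is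
nonnegative by Gibbs' inequality since the product of the marginals has total mass `1 ^ J = 1`. -/

open Finset

noncomputable section

/-- Marginal pmf of the data variable `x` under the joint pmf `q`. -/
def margX {X : Type*} {J : ℕ} {Z : Fin J → Type*} [Fintype X] [∀ i, Fintype (Z i)]
    (q : X → (∀ i, Z i) → ℝ) (x : X) : ℝ :=
  ∑ z, q x z

/-- Joint pmf of `x` and the factors `{z_i}_{i ∈ S}`, evaluated at a full
configuration `z` (it only depends on the coordinates of `z` in `S`). -/
def jointS {X : Type*} {J : ℕ} {Z : Fin J → Type*} [Fintype X] [∀ i, Fintype (Z i)]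
    [∀ i, DecidableEq (Z i)]
    (q : X → (∀ i, Z i) → ℝ) (S : Finset (Fin J)) (x : X) (z : ∀ i, Z i) : ℝ :=
  ∑ z', if ∀ i ∈ S, z' i = z i then q x z' else 0

/-- Marginal pmf of the factors `{z_i}_{i ∈ S}`. -/
def margS {X : Type*} {J : ℕ} {Z : Fin J → Type*} [Fintype X] [∀ i, Fintype (Z i)]
    [∀ i, DecidableEq (Z i)]
    (q : X → (∀ i, Z i) → ℝ) (S : Finset (Fin J)) (z : ∀ i, Z i) : ℝ :=
  ∑ x, jointS q S x z

/-- Mutual information `I({z_i}_{i∈S}; x)`, written as an expectation of the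
log-ratio under the joint pmf. -/
def mInfo {X : Type*} {J : ℕ} {Z : Fin J → Type*} [Fintype X] [∀ i, Fintype (Z i)]
    [∀ i, DecidableEq (Z i)]
    (q : X → (∀ i, Z i) → ℝ) (S : Finset (Fin J)) : ℝ :=
  ∑ x, ∑ z, q x z * Real.log (jointS q S x z / (margX q x * margS q S z))

/-- Conditional mutual information `I(z_j; x | {z_i}_{i∈T})`, written as an
expectation of the log-ratio under the joint pmf. -/
def cInfo {X : Type*} {J : ℕ} {Z : Fin J → Type*} [Fintype X] [∀ i, Fintype (Z i)]
    [∀ i, DecidableEq (Z i)]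
    (q : X → (∀ i, Z i) → ℝ) (j : Fin J) (T : Finset (Fin J)) : ℝ :=
  ∑ x, ∑ z, q x z *
    Real.log ((jointS q (insert j T) x z * margS q T z) /
      (jointS q T x z * margS q (insert j T) z))

open Real

lemma sum_mul_log_div_nonneg {ι : Type*} [Fintype ι] {p r : ι → ℝ} (hp : ∀ i, 0 ≤ p i)
    (hr : ∀ i, 0 ≤ r i) (hpr : ∀ i, 0 < p i → 0 < r i) (hmass : ∑ i, r i ≤ ∑ i, p i) :
    0 ≤ ∑ i, p i * log (p i / r i) := by
  have hterm : ∀ i, p i - r i ≤ p i * log (p i / r i) := by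
    intro i
    rcases (hp i).eq_or_lt with h0 | hpos
    · simp [← h0, hr i]
    · have := mul_le_mul_of_nonneg_left
        (one_sub_inv_le_log_of_pos (div_pos hpos (hpr i hpos))) hpos.le
      rwa [inv_div, mul_sub, mul_one, mul_div_cancel₀ _ hpos.ne'] at this
  calc (0 : ℝ) ≤ ∑ i, (p i - r i) := by rw [sum_sub_distrib]; linarith
    _ ≤ _ := sum_le_sum fun i _ => hterm i

section Marginals

variable {X : Type*} {J : ℕ} {Z : Fin J → Type*} [Fintype X] [∀ i, Fintype (Z i)]
  (q : X → (∀ i, Z i) → ℝ)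

lemma le_margX (hq : ∀ x z, 0 ≤ q x z) (x : X) (z : ∀ i, Z i) : q x z ≤ margX q x :=
  single_le_sum (fun z' _ => hq x z') (mem_univ z)

variable [∀ i, DecidableEq (Z i)]

lemma jointS_univ (x : X) (z : ∀ i, Z i) : jointS q univ x z = q x z := by
  rw [jointS, sum_eq_single_of_mem z (mem_univ z)]
  · simp
  · intro z' _ hne
    exact if_neg fun h => hne (funext fun i => h i (mem_univ i))

lemma margS_univ (z : ∀ i, Z i) : margS q univ z = ∑ x, q x z :=
  sum_congr rfl fun x _ => jointS_univ q x z

lemma le_jointS (hq : ∀ x z, 0 ≤ q x z) (S : Finset (Fin J)) (x : X) (z : ∀ i, Z i) :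
    q x z ≤ jointS q S x z := by
  have := single_le_sum (f := fun z' => if ∀ i ∈ S, z' i = z i then q x z' else 0)
    (fun z' _ => by split_ifs <;> simp [hq]) (mem_univ z)
  simpa [jointS] using this

lemma sum_le_margS (hq : ∀ x z, 0 ≤ q x z) (S : Finset (Fin J)) (z : ∀ i, Z i) :
    ∑ x, q x z ≤ margS q S z :=
  sum_le_sum fun x _ => le_jointS q hq S x z

lemma sum_prod_margS_singleton :
    ∑ z : ∀ i, Z i, ∏ j, margS q {j} z = (∑ x, ∑ z, q x z) ^ J := by
  let f : ∀ j, Z j → ℝ := fun j y => ∑ x, ∑ z', if z' j = y then q x z' else 0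
  have hf : ∀ z : ∀ i, Z i, ∀ j, margS q {j} z = f j (z j) := by
    intro z j
    simp [margS, jointS, f]
  have hmass : ∀ j, ∑ y, f j y = ∑ x, ∑ z, q x z := by
    intro j
    rw [sum_comm]
    refine sum_congr rfl fun x _ => ?_
    rw [sum_comm]
    simp
  simp_rw [hf, ← Fintype.prod_sum, hmass, prod_const, card_univ, Fintype.card_fin]

lemma log_ratio_univ_sub_sum_log_ratio_singleton (hq : ∀ x z, 0 ≤ q x z) {x : X}
    {z : ∀ i, Z i} (hpos : 0 < q x z)
    (hci : q x z / margX q x = ∏ j, jointS q {j} x z / margX q x) :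
    log (jointS q univ x z / (margX q x * margS q univ z)) -
        ∑ j, log (jointS q {j} x z / (margX q x * margS q {j} z)) =
      -log ((∑ x, q x z) / ∏ j, margS q {j} z) := by
  have hc : 0 < margX q x := hpos.trans_le (le_margX q hq x z)
  have hp : 0 < ∑ x, q x z := hpos.trans_le (single_le_sum (fun x _ => hq x z) (mem_univ x))
  have hm : ∀ j, 0 < margS q {j} z := fun j => hp.trans_le (sum_le_margS q hq {j} z)
  have hr : 0 < ∏ j, margS q {j} z := prod_pos fun j _ => hm j
  have hratio : ∀ j, 0 < jointS q {j} x z / (margX q x * margS q {j} z) :=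
    fun j => div_pos (hpos.trans_le (le_jointS q hq {j} x z)) (mul_pos hc (hm j))
  have hfactor : q x z / (margX q x * ∑ x, q x z) =
      (∏ j, jointS q {j} x z / (margX q x * margS q {j} z)) *
        ((∏ j, margS q {j} z) / ∑ x, q x z) := by
    simp_rw [← div_div, prod_div_distrib (f := fun j => jointS q {j} x z / margX q x), ← hci]
    field_simp
  rw [jointS_univ, margS_univ, hfactor,
    log_mul (prod_pos fun j _ => hratio j).ne' (div_pos hr hp).ne',
    log_prod fun j _ => (hratio j).ne', ← log_inv, inv_div]
  ring

lemma mInfo_univ_sub_sum_mInfo_singleton (hq : ∀ x z, 0 ≤ q x z)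
    (hci : ∀ x, 0 < margX q x → ∀ z, q x z / margX q x = ∏ j, jointS q {j} x z / margX q x) :
    mInfo q univ - ∑ j, mInfo q {j} =
      -∑ z, (∑ x, q x z) * log ((∑ x, q x z) / ∏ j, margS q {j} z) := by
  have hswap : ∑ j, mInfo q {j} =
      ∑ x, ∑ z, q x z * ∑ j, log (jointS q {j} x z / (margX q x * margS q {j} z)) := by
    simp only [mInfo, mul_sum]
    rw [sum_comm]
    exact sum_congr rfl fun x _ => sum_comm
  have hterm : ∀ x z, q x z * log (jointS q univ x z / (margX q x * margS q univ z)) -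
      q x z * ∑ j, log (jointS q {j} x z / (margX q x * margS q {j} z)) =
      q x z * -log ((∑ x, q x z) / ∏ j, margS q {j} z) := by
    intro x z
    rcases (hq x z).eq_or_lt with h0 | hpos
    · simp [← h0]
    · rw [← mul_sub, log_ratio_univ_sub_sum_log_ratio_singleton q hq hpos
        (hci x (hpos.trans_le (le_margX q hq x z)) z)]
  rw [hswap, mInfo, ← sum_sub_distrib]
  simp_rw [← sum_sub_distrib, hterm]
  rw [sum_comm, ← sum_neg_distrib]
  simp [sum_mul]

end Marginals

/-- If the components of `z` are conditionally independent given `x`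
(`q(z|x) = Π_j q(z_j|x)` whenever `q(x) > 0`), then
`I(z; x) − Σ_j I(z_j; x) = −D_KL(q(z) ‖ Π_j q(z_j)) ≤ 0`: the joint mutual
information is at most the sum of the per-factor mutual informations, with
gap equal to the total correlation of the marginal `q(z)`. -/
theorem mInfo_gap_eq_neg_TC_of_condIndep {X : Type*} {J : ℕ}
    {Z : Fin J → Type*}
    [Fintype X] [∀ i, Fintype (Z i)] [∀ i, DecidableEq (Z i)]
    (q : X → (∀ i, Z i) → ℝ)
    (hnn : ∀ x z, 0 ≤ q x z) (hsum : ∑ x, ∑ z, q x z = 1)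
    (hci : ∀ x, 0 < margX q x →
        ∀ z, q x z / margX q x = ∏ j, jointS q {j} x z / margX q x) :
    mInfo q Finset.univ - ∑ j, mInfo q {j} =
      -(∑ z : ∀ i, Z i, (∑ x, q x z) *
          Real.log ((∑ x, q x z) / ∏ j, margS q {j} z)) ∧
    mInfo q Finset.univ ≤ ∑ j, mInfo q {j} := by
  have hgap := mInfo_univ_sub_sum_mInfo_singleton q hnn hci
  have hp : ∀ z : ∀ i, Z i, 0 ≤ ∑ x, q x z := fun z => sum_nonneg fun x _ => hnn x z
  have hmarg : ∀ z j, ∑ x, q x z ≤ margS q {j} z := fun z j => sum_le_margS q hnn {j} z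
  have hTC : 0 ≤ ∑ z : ∀ i, Z i, (∑ x, q x z) * log ((∑ x, q x z) / ∏ j, margS q {j} z) := by
    refine sum_mul_log_div_nonneg hp
      (fun z => prod_nonneg fun j _ => (hp z).trans (hmarg z j))
      (fun z hpos => prod_pos fun j _ => hpos.trans_le (hmarg z j)) ?_
    rw [sum_prod_margS_singleton, hsum, one_pow, sum_comm, hsum]
  exact ⟨hgap, by linarith⟩
end
end
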